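/- Let σ = 2153-4 and τ = 3154-2. For every n ≥ 2: (a) T_n(σ)[1] = T_n(σ)[n−1] = T_n(σ)[n] = T_{n−1}(σ); (b) T_n(τ)[1] = T_n(τ)[2] = T_n(τ)[n] = T_{n−1}(τ); (c) T_n(σ)[n, ℓ] = T_{n−1}(σ)[ℓ] for every 1 ≤ ℓ ≤ n−1. -/
import Mathlib


/-- The set of permutation words of length `n`: injective functions
`Fin n → ℕ` whose range is `{1, …, n}` (the word `π_1 π_2 ⋯ π_n`). -/
def PermWords (n : ℕ) : Set (Fin n → ℕ) :=
  {π | Function.Injective π ∧ Set.range π = Set.Icc 1 n}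

/-- A word `σ : Fin k → ℕ` is a permutation word, i.e. an element of `S_k`. -/
def IsPermWord {k : ℕ} (σ : Fin k → ℕ) : Prop :=
  Function.Injective σ ∧ Set.range σ = Set.Icc 1 k

/-- `π` contains the vincular pattern `(σ, T)`.  Here `T ⊆ {1, …, k-1}` is the set of
(1-based) adjacency indices: `j ∈ T` forces the `j`-th and `(j+1)`-st letters of an
occurrence to be at adjacent positions.  (Positions are 0-based `Fin` indices, so the
1-based adjacency index `j+1 ∈ T` relates 0-based positions `j` and `j+1`.) -/
def Contains {n k : ℕ} (π : Fin n → ℕ) (σ : Fin k → ℕ) (T : Set ℕ) : Prop :=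
  ∃ idx : Fin k → Fin n, StrictMono idx ∧
    (∀ s t : Fin k, π (idx s) < π (idx t) ↔ σ s < σ t) ∧
    (∀ j : ℕ, j + 1 ∈ T → ∀ h : j + 1 < k,
      ((idx ⟨j + 1, h⟩ : ℕ) = (idx ⟨j, Nat.lt_of_succ_lt h⟩ : ℕ) + 1))

/-- The first `z` letters of `a` are order-isomorphic to the last `z` letters of `b`
(i.e. `a_1 ⋯ a_z ∼ b_{k-z+1} ⋯ b_k`). -/
def OrderIsoAt {k : ℕ} (a b : Fin k → ℕ) (z : ℕ) : Prop :=
  ∀ s t : Fin k, (s : ℕ) < z → (t : ℕ) < z →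
    ∀ hs : k - z + (s : ℕ) < k, ∀ ht : k - z + (t : ℕ) < k,
      (a s < a t ↔ b ⟨k - z + (s : ℕ), hs⟩ < b ⟨k - z + (t : ℕ), ht⟩)

/-- A Young diagram: a finite, downward-closed set of cells with positive coordinates
(first coordinate = column, second coordinate = row). -/
structure YoungShape where
  cells : Set (ℕ × ℕ)
  finite : cells.Finite
  pos : ∀ c ∈ cells, 1 ≤ c.1 ∧ 1 ≤ c.2
  lower : ∀ c ∈ cells, ∀ a b : ℕ, 1 ≤ a → a ≤ c.1 → 1 ≤ b → b ≤ c.2 → (a, b) ∈ cells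

/-- A filling of a Young diagram: a set of selected cells with pairwise distinct
first coordinates and pairwise distinct second coordinates. -/
def IsFilling (D : YoungShape) (F : Set (ℕ × ℕ)) : Prop :=
  F ⊆ D.cells ∧
  (∀ c ∈ F, ∀ c' ∈ F, c.1 = c'.1 → c = c') ∧
  (∀ c ∈ F, ∀ c' ∈ F, c.2 = c'.2 → c = c')

/-- A filling `F` of the Young diagram `D` contains the vincular pattern `(σ, T)`. -/
def FillingContains (D : YoungShape) (F : Set (ℕ × ℕ)) {k : ℕ}
    (σ : Fin k → ℕ) (T : Set ℕ) : Prop :=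
  ∃ idx v : Fin k → ℕ, StrictMono idx ∧
    (∀ s : Fin k, (idx s, v s) ∈ F) ∧
    (∀ s t : Fin k, v s < v t ↔ σ s < σ t) ∧
    (∀ s t : Fin k, (idx s, v t) ∈ D.cells) ∧
    (∀ j : ℕ, j + 1 ∈ T → ∀ h : j + 1 < k,
      idx ⟨j + 1, h⟩ = idx ⟨j, Nat.lt_of_succ_lt h⟩ + 1)

/-- The rows of `D` containing no selected cell of `F`. -/
def emptyRows (D : YoungShape) (F : Set (ℕ × ℕ)) : Set ℕ :=
  {r | (∃ c ∈ D.cells, c.2 = r) ∧ ∀ c ∈ F, c.2 ≠ r}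

/-- The columns of `D` containing no selected cell of `F`. -/
def emptyCols (D : YoungShape) (F : Set (ℕ × ℕ)) : Set ℕ :=
  {r | (∃ c ∈ D.cells, c.1 = r) ∧ ∀ c ∈ F, c.1 ≠ r}

/-- Filling-shape-Wilf-equivalence of the vincular patterns `(σ, Tσ)` and `(τ, Tτ)`. -/
def FSWilfEquiv {k : ℕ} (σ : Fin k → ℕ) (Tσ : Set ℕ) (τ : Fin k → ℕ) (Tτ : Set ℕ) : Prop :=
  ∀ (D : YoungShape) (R C : Set ℕ),
    {F : Set (ℕ × ℕ) | IsFilling D F ∧ ¬ FillingContains D F σ Tσ ∧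
      emptyRows D F = R ∧ emptyCols D F = C}.ncard =
    {F : Set (ℕ × ℕ) | IsFilling D F ∧ ¬ FillingContains D F τ Tτ ∧
      emptyRows D F = R ∧ emptyCols D F = C}.ncard

/-- The consecutive pattern `σ'` (of length `k`) occurs in `π` at the 1-based
positions `x+1, …, x+k`. -/
def OccursAt {n k : ℕ} (π : Fin n → ℕ) (σ' : Fin k → ℕ) (x : ℕ) : Prop :=
  ∃ h : x + k ≤ n, ∀ s t : Fin k,
    (π ⟨x + (s : ℕ), by have := s.isLt; omega⟩ < π ⟨x + (t : ℕ), by have := t.isLt; omega⟩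
      ↔ σ' s < σ' t)

/-- `T_n(σ)[v]` for a quasi-consecutive pattern `σ = σ_1 ⋯ σ_k - σ_{k+1}`
(adjacency set `{1, …, k-1}`): the number of `σ`-avoiding permutations of length `n`
beginning with the word `v`. -/
noncomputable def Tnv (n : ℕ) {k : ℕ} (σ : Fin (k + 1) → ℕ) {r : ℕ} (v : Fin r → ℕ) : ℕ :=
  {π : Fin n → ℕ | π ∈ PermWords n ∧ ¬ Contains π σ (Set.Icc 1 (k - 1)) ∧
    ∀ p : Fin r, ∀ h : (p : ℕ) < n, π ⟨(p : ℕ), h⟩ = v p}.ncard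

/-- `T_n(σ)[x, i, w]` for a quasi-consecutive pattern `σ = σ_1 ⋯ σ_k - σ_{k+1}`:
the number of `σ`-avoiding permutations of length `n` whose earliest occurrence of
the consecutive pattern `σ_1 ⋯ σ_k` is at 1-based positions `x+1, …, x+k` and such
that `w = π_1 ⋯ π_{x+i-1} π_{x+i+1} ⋯ π_{x+k}`. -/
noncomputable def TnXIW (n : ℕ) {k : ℕ} (σ : Fin (k + 1) → ℕ) (x i : ℕ) (w : Fin (x + k - 1) → ℕ) : ℕ :=
  {π : Fin n → ℕ | π ∈ PermWords n ∧ ¬ Contains π σ (Set.Icc 1 (k - 1)) ∧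
    OccursAt π (fun t : Fin k => σ t.castSucc) x ∧
    (∀ x' < x, ¬ OccursAt π (fun t : Fin k => σ t.castSucc) x') ∧
    (∀ p : Fin (x + k - 1), ∀ h1 : (p : ℕ) < n, ∀ h2 : (p : ℕ) + 1 < n,
      w p = if (p : ℕ) + 1 ≤ x + i - 1 then π ⟨(p : ℕ), h1⟩ else π ⟨(p : ℕ) + 1, h2⟩)}.ncard

/-- `T_n(σ) = |S_n(σ)|` for a length-5 quasi-consecutive pattern word `σ`
(adjacency set `T = {1,2,3}`). -/
noncomputable def T0 (n : ℕ) (σ : Fin 5 → ℕ) : ℕ :=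
  {π : Fin n → ℕ | π ∈ PermWords n ∧ ¬ Contains π σ ({1, 2, 3} : Set ℕ)}.ncard

/-- `T_n(σ)[k]`: the number of `σ`-avoiding permutations of length `n` with `π_1 = a`. -/
noncomputable def T1 (n : ℕ) (σ : Fin 5 → ℕ) (a : ℕ) : ℕ :=
  {π : Fin n → ℕ | π ∈ PermWords n ∧ ¬ Contains π σ ({1, 2, 3} : Set ℕ) ∧
    ∀ h : 0 < n, π ⟨0, h⟩ = a}.ncard

/-- `T_n(σ)[k, ℓ]`: the number of `σ`-avoiding permutations of length `n` with
`π_1 = a` and `π_2 = b`. -/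
noncomputable def T2 (n : ℕ) (σ : Fin 5 → ℕ) (a b : ℕ) : ℕ :=
  {π : Fin n → ℕ | π ∈ PermWords n ∧ ¬ Contains π σ ({1, 2, 3} : Set ℕ) ∧
    (∀ h : 0 < n, π ⟨0, h⟩ = a) ∧ (∀ h : 1 < n, π ⟨1, h⟩ = b)}.ncard

namespace S15

def strip (a v : ℕ) : ℕ := if a < v then v - 1 else v
def liftv (a v : ℕ) : ℕ := if a ≤ v then v + 1 else v

lemma strip_lift (a v : ℕ) : strip a (liftv a v) = v := by
  unfold strip liftv; split_ifs <;> omega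

lemma lift_strip (a v : ℕ) (h : v ≠ a) : liftv a (strip a v) = v := by
  unfold strip liftv; split_ifs <;> omega

lemma strip_lt_strip {a u v : ℕ} (hu : u ≠ a) (hv : v ≠ a) :
    strip a u < strip a v ↔ u < v := by
  unfold strip; split_ifs <;> omega

lemma strip_inj {a u v : ℕ} (hu : u ≠ a) (hv : v ≠ a) (h : strip a u = strip a v) : u = v := by
  unfold strip at h; split_ifs at h <;> omega

lemma lift_ne (a v : ℕ) : liftv a v ≠ a := by unfold liftv; split_ifs <;> omega

def del (n a : ℕ) (π : Fin n → ℕ) : Fin (n-1) → ℕ :=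
  fun p => strip a (π ⟨(p:ℕ)+1, by have := p.isLt; omega⟩)

def ins (n a : ℕ) (π' : Fin (n-1) → ℕ) : Fin n → ℕ :=
  fun q => if h : (q:ℕ) = 0 then a else liftv a (π' ⟨(q:ℕ)-1, by have := q.isLt; omega⟩)

variable {n : ℕ}

lemma ins_zero (hn : 2 ≤ n) (a : ℕ) (π' : Fin (n-1) → ℕ) (h : 0 < n) :
    ins n a π' ⟨0, h⟩ = a := by
  unfold ins; rw [dif_pos rfl]

lemma ins_succ (hn : 2 ≤ n) (a : ℕ) (π' : Fin (n-1) → ℕ) (p : Fin (n-1))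
    (h : (p:ℕ)+1 < n) : ins n a π' ⟨(p:ℕ)+1, h⟩ = liftv a (π' p) := by
  unfold ins
  rw [dif_neg (by simp)]
  rfl

lemma ins_ne (hn : 2 ≤ n) (a : ℕ) (π' : Fin (n-1) → ℕ) (q : Fin n) (h0 : (q:ℕ) ≠ 0) :
    ins n a π' q = liftv a (π' ⟨(q:ℕ)-1, by have := q.isLt; omega⟩) := by
  unfold ins
  rw [dif_neg h0]

lemma del_ins (hn : 2 ≤ n) (a : ℕ) (π' : Fin (n-1) → ℕ) : del n a (ins n a π') = π' := by
  funext p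
  have hp := p.isLt
  show strip a (ins n a π' ⟨(p:ℕ)+1, by omega⟩) = π' p
  rw [ins_succ hn, strip_lift]

lemma ins_del (hn : 2 ≤ n) (a : ℕ) (π : Fin n → ℕ) (hinj : Function.Injective π)
    (hπ0 : π ⟨0, by omega⟩ = a) : ins n a (del n a π) = π := by
  funext q
  have hq := q.isLt
  by_cases h0 : (q : ℕ) = 0
  · have : q = ⟨0, by omega⟩ := Fin.ext h0
    rw [this, ins_zero hn, hπ0]
  · rw [ins_ne hn a _ q h0]
    show liftv a (strip a (π ⟨(q:ℕ)-1+1, by omega⟩)) = π q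
    have h1 : (⟨(q:ℕ)-1+1, by omega⟩ : Fin n) = q := by apply Fin.ext; simp; omega
    rw [h1, lift_strip]
    intro h
    exact h0 (Fin.val_eq_of_eq (hinj (h.trans hπ0.symm)))

lemma pi_ne {π : Fin n → ℕ} (hinj : Function.Injective π) (hn : 2 ≤ n) (a : ℕ)
    (hπ0 : π ⟨0, by omega⟩ = a) {q : Fin n} (hq : (q : ℕ) ≠ 0) : π q ≠ a := by
  intro h
  exact hq (Fin.val_eq_of_eq (hinj (h.trans hπ0.symm)))

lemma del_mem (hn : 2 ≤ n) (a : ℕ) (ha1 : 1 ≤ a) (ha2 : a ≤ n) (π : Fin n → ℕ)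
    (hπ : π ∈ PermWords n) (hπ0 : π ⟨0, by omega⟩ = a) : del n a π ∈ PermWords (n-1) := by
  obtain ⟨hinj, hrange⟩ := hπ
  have hmem : ∀ q : Fin n, 1 ≤ π q ∧ π q ≤ n := by
    intro q
    have : π q ∈ Set.Icc 1 n := hrange ▸ Set.mem_range_self q
    simpa using this
  constructor
  · intro p q h
    have hp := p.isLt; have hq := q.isLt
    have h1 : π ⟨(p:ℕ)+1, by omega⟩ ≠ a := pi_ne hinj hn a hπ0 (by simp)
    have h2 : π ⟨(q:ℕ)+1, by omega⟩ ≠ a := pi_ne hinj hn a hπ0 (by simp)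
    have := strip_inj h1 h2 h
    have := hinj this
    apply Fin.ext
    exact Nat.succ_injective (Fin.val_eq_of_eq this)
  · ext w
    constructor
    · rintro ⟨p, rfl⟩
      have hp := p.isLt
      have h1 : π ⟨(p:ℕ)+1, by omega⟩ ≠ a := pi_ne hinj hn a hπ0 (by simp)
      have h2 := hmem ⟨(p:ℕ)+1, by omega⟩
      simp only [Set.mem_Icc]
      unfold del strip; split_ifs <;> omega
    · intro hw
      simp only [Set.mem_Icc] at hw
      have hlw : liftv a w ∈ Set.Icc 1 n := by
        simp only [Set.mem_Icc]; unfold liftv; split_ifs <;> omega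
      rw [← hrange] at hlw
      obtain ⟨q, hq⟩ := hlw
      have hq0 : (q : ℕ) ≠ 0 := by
        intro h
        have : q = ⟨0, by omega⟩ := Fin.ext h
        rw [this, hπ0] at hq
        exact lift_ne a w hq.symm
      refine ⟨⟨(q:ℕ)-1, by have := q.isLt; omega⟩, ?_⟩
      unfold del
      have : (⟨(q:ℕ)-1+1, by have := q.isLt; omega⟩ : Fin n) = q := by
        apply Fin.ext; simp; omega
      rw [this, hq, strip_lift]

lemma ins_mem (hn : 2 ≤ n) (a : ℕ) (ha1 : 1 ≤ a) (ha2 : a ≤ n) (π' : Fin (n-1) → ℕ)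
    (hπ' : π' ∈ PermWords (n-1)) : ins n a π' ∈ PermWords n := by
  obtain ⟨hinj, hrange⟩ := hπ'
  have hmem : ∀ q : Fin (n-1), 1 ≤ π' q ∧ π' q ≤ n - 1 := by
    intro q
    have : π' q ∈ Set.Icc 1 (n-1) := hrange ▸ Set.mem_range_self q
    simpa using this
  constructor
  · intro p q h
    have hp := p.isLt; have hq := q.isLt
    unfold ins at h
    by_cases h1 : (p:ℕ) = 0 <;> by_cases h2 : (q:ℕ) = 0
    · exact Fin.ext (h1.trans h2.symm)
    · rw [dif_pos h1, dif_neg h2] at h; exact absurd h.symm (lift_ne a _)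
    · rw [dif_neg h1, dif_pos h2] at h; exact absurd h (lift_ne a _)
    · rw [dif_neg h1, dif_neg h2] at h
      have : ((p:ℕ)-1 : ℕ) = ((q:ℕ)-1 : ℕ) := by
        have hl : Function.Injective (liftv a) := by
          intro u v h; unfold liftv at h; split_ifs at h <;> omega
        exact Fin.val_eq_of_eq (hinj (hl h))
      apply Fin.ext; omega
  · ext w
    constructor
    · rintro ⟨q, rfl⟩
      simp only [Set.mem_Icc]
      unfold ins
      by_cases h1 : (q:ℕ) = 0
      · rw [dif_pos h1]; omega
      · rw [dif_neg h1]
        have := hmem ⟨(q:ℕ)-1, by have := q.isLt; omega⟩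
        unfold liftv; split_ifs <;> omega
    · intro hw
      simp only [Set.mem_Icc] at hw
      by_cases hwa : w = a
      · exact ⟨⟨0, by omega⟩, by rw [ins_zero hn]; exact hwa.symm⟩
      · have hsw : strip a w ∈ Set.Icc 1 (n-1) := by
          simp only [Set.mem_Icc]; unfold strip; split_ifs <;> omega
        rw [← hrange] at hsw
        obtain ⟨p, hp⟩ := hsw
        have hpl := p.isLt
        refine ⟨⟨(p:ℕ)+1, by omega⟩, ?_⟩
        rw [ins_succ hn, hp]
        exact lift_strip a w hwa

lemma contains_del (hn : 2 ≤ n) (a : ℕ) (π : Fin n → ℕ) (hinj : Function.Injective π)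
    (hπ0 : π ⟨0, by omega⟩ = a) (σ : Fin 5 → ℕ) (T : Set ℕ)
    (h : Contains (del n a π) σ T) : Contains π σ T := by
  obtain ⟨idx, hmono, hord, hadj⟩ := h
  refine ⟨fun s => ⟨(idx s : ℕ) + 1, by have := (idx s).isLt; omega⟩, ?_, ?_, ?_⟩
  · intro s t hst
    have := hmono hst
    simp only [Fin.lt_def] at this ⊢
    omega
  · intro s t
    rw [← hord s t]
    exact (strip_lt_strip (pi_ne hinj hn a hπ0 (by simp)) (pi_ne hinj hn a hπ0 (by simp))).symm
  · intro j hj h5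
    have := hadj j hj h5
    simp only [Fin.val_mk] at this ⊢
    omega

lemma del_contains (hn : 2 ≤ n) (a : ℕ) (π : Fin n → ℕ) (hπ : π ∈ PermWords n)
    (hπ0 : π ⟨0, by omega⟩ = a) (σ : Fin 5 → ℕ) (T : Set ℕ)
    (H : ∀ f : Fin 5 → ℕ, Function.Injective f → (∀ s t, f s < f t ↔ σ s < σ t) →
         (∀ s, 1 ≤ f s ∧ f s ≤ n) → f 0 ≠ a)
    (h : Contains π σ T) : Contains (del n a π) σ T := by
  obtain ⟨hinj, hrange⟩ := hπ
  obtain ⟨idx, hmono, hord, hadj⟩ := h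
  have hmem : ∀ q : Fin n, 1 ≤ π q ∧ π q ≤ n := by
    intro q
    have : π q ∈ Set.Icc 1 n := hrange ▸ Set.mem_range_self q
    simpa using this
  have h0 : (idx 0 : ℕ) ≠ 0 := by
    intro h0
    refine H (fun s => π (idx s)) (fun s t hst => hmono.injective (hinj hst)) hord
      (fun s => hmem _) ?_
    have heq : idx 0 = ⟨0, by omega⟩ := Fin.ext h0
    show π (idx 0) = a
    rw [heq, hπ0]
  have hpos : ∀ s : Fin 5, 1 ≤ (idx s : ℕ) := by
    intro s
    have := hmono.monotone (Fin.zero_le s)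
    simp only [Fin.le_def] at this
    omega
  have hne : ∀ s : Fin 5, (idx s : ℕ) ≠ 0 := fun s => by have := hpos s; omega
  refine ⟨fun s => ⟨(idx s : ℕ) - 1, by have := (idx s).isLt; have := hpos s; omega⟩, ?_, ?_, ?_⟩
  · intro s t hst
    have := hmono hst
    have h1 := hpos s
    simp only [Fin.lt_def] at this ⊢
    omega
  · intro s t
    rw [← hord s t]
    have e : ∀ s : Fin 5, del n a π ⟨(idx s : ℕ) - 1, by have := (idx s).isLt; have := hpos s; omega⟩
        = strip a (π (idx s)) := by
      intro s
      show strip a (π ⟨(idx s : ℕ) - 1 + 1, _⟩) = strip a (π (idx s))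
      have heq : (⟨(idx s : ℕ) - 1 + 1, by have := (idx s).isLt; have := hpos s; omega⟩ : Fin n)
          = idx s := Fin.ext (by have := hpos s; simp; omega)
      rw [heq]
    rw [e s, e t]
    exact strip_lt_strip (pi_ne hinj hn a hπ0 (hne s)) (pi_ne hinj hn a hπ0 (hne t))
  · intro j hj h5
    have := hadj j hj h5
    have := hpos ⟨j, Nat.lt_of_succ_lt h5⟩
    simp only [Fin.val_mk] at *
    omega

lemma key (hn : 2 ≤ n) (σ : Fin 5 → ℕ) (T : Set ℕ) (a : ℕ) (ha1 : 1 ≤ a) (ha2 : a ≤ n)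
    (H : ∀ f : Fin 5 → ℕ, Function.Injective f → (∀ s t, f s < f t ↔ σ s < σ t) →
         (∀ s, 1 ≤ f s ∧ f s ≤ n) → f 0 ≠ a)
    (Q : (Fin (n-1) → ℕ) → Prop) :
    {π : Fin n → ℕ | π ∈ PermWords n ∧ ¬ Contains π σ T ∧ (∀ h : 0 < n, π ⟨0, h⟩ = a) ∧
      Q (del n a π)}.ncard
    = {π' : Fin (n-1) → ℕ | π' ∈ PermWords (n-1) ∧ ¬ Contains π' σ T ∧ Q π'}.ncard := by
  set A := {π : Fin n → ℕ | π ∈ PermWords n ∧ ¬ Contains π σ T ∧ (∀ h : 0 < n, π ⟨0, h⟩ = a) ∧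
      Q (del n a π)} with hA
  set B := {π' : Fin (n-1) → ℕ | π' ∈ PermWords (n-1) ∧ ¬ Contains π' σ T ∧ Q π'} with hB
  have hinjOn : Set.InjOn (del n a) A := by
    intro π1 h1 π2 h2 he
    have e1 := ins_del hn a π1 h1.1.1 (h1.2.2.1 (by omega))
    have e2 := ins_del hn a π2 h2.1.1 (h2.2.2.1 (by omega))
    rw [← e1, ← e2, he]
  have himg : del n a '' A = B := by
    ext π'
    constructor
    · rintro ⟨π, hπ, rfl⟩
      obtain ⟨hpw, hnc, hfst, hQ⟩ := hπ
      refine ⟨del_mem hn a ha1 ha2 π hpw (hfst (by omega)), ?_, hQ⟩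
      intro hc
      exact hnc (contains_del hn a π hpw.1 (hfst (by omega)) σ T hc)
    · rintro ⟨hpw, hnc, hQ⟩
      refine ⟨ins n a π', ⟨ins_mem hn a ha1 ha2 π' hpw, ?_, ?_, ?_⟩, del_ins hn a π'⟩
      · intro hc
        have := del_contains hn a (ins n a π') (ins_mem hn a ha1 ha2 π' hpw)
          (ins_zero hn a π' (by omega)) σ T H hc
        rw [del_ins hn a π'] at this
        exact hnc this
      · intro h
        exact ins_zero hn a π' h
      · rw [del_ins hn a π']
        exact hQ
  rw [← himg, Set.ncard_image_of_injOn hinjOn]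


lemma keyT1 (hn : 2 ≤ n) (σ : Fin 5 → ℕ) (a : ℕ) (ha1 : 1 ≤ a) (ha2 : a ≤ n)
    (H : ∀ f : Fin 5 → ℕ, Function.Injective f → (∀ s t, f s < f t ↔ σ s < σ t) →
         (∀ s, 1 ≤ f s ∧ f s ≤ n) → f 0 ≠ a) : T1 n σ a = T0 (n-1) σ := by
  have h := key hn σ ({1, 2, 3} : Set ℕ) a ha1 ha2 H (fun _ => True)
  simp only [and_true] at h
  unfold T1 T0
  exact h

lemma keyT2 (hn : 2 ≤ n) (σ : Fin 5 → ℕ) (ℓ : ℕ) (hl2 : ℓ ≤ n - 1)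
    (H : ∀ f : Fin 5 → ℕ, Function.Injective f → (∀ s t, f s < f t ↔ σ s < σ t) →
         (∀ s, 1 ≤ f s ∧ f s ≤ n) → f 0 ≠ n) : T2 n σ n ℓ = T1 (n-1) σ ℓ := by
  have hiff : ∀ π : Fin n → ℕ, π ∈ PermWords n → (∀ h : 0 < n, π ⟨0, h⟩ = n) →
      ((∀ h : 1 < n, π ⟨1, h⟩ = ℓ) ↔ (∀ h : 0 < n - 1, del n n π ⟨0, h⟩ = ℓ)) := by
    intro π hpw h0
    have hb : π ⟨1, by omega⟩ ≤ n := by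
      have : π ⟨1, by omega⟩ ∈ Set.Icc 1 n := hpw.2 ▸ Set.mem_range_self _
      exact (Set.mem_Icc.mp this).2
    have hne : π ⟨1, by omega⟩ ≠ n := by
      intro h
      have h2 := hpw.1 (h.trans (h0 (by omega)).symm)
      have := Fin.val_eq_of_eq h2
      simp at this
    constructor
    · intro h hh
      show strip n (π ⟨1, by omega⟩) = ℓ
      unfold strip
      rw [if_neg (by omega)]
      exact h (by omega)
    · intro h hh
      have h2 := h (by omega)
      have h3 : strip n (π ⟨1, by omega⟩) = ℓ := h2
      unfold strip at h3
      rw [if_neg (by omega)] at h3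
      exact h3
  have e1 : {π : Fin n → ℕ | π ∈ PermWords n ∧ ¬ Contains π σ ({1, 2, 3} : Set ℕ) ∧
        (∀ h : 0 < n, π ⟨0, h⟩ = n) ∧ ∀ h : 1 < n, π ⟨1, h⟩ = ℓ}
      = {π : Fin n → ℕ | π ∈ PermWords n ∧ ¬ Contains π σ ({1, 2, 3} : Set ℕ) ∧
        (∀ h : 0 < n, π ⟨0, h⟩ = n) ∧ ∀ h : 0 < n - 1, del n n π ⟨0, h⟩ = ℓ} := by
    ext π
    simp only [Set.mem_setOf_eq]
    constructor
    · rintro ⟨hpw, hnc, h0, h1⟩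
      exact ⟨hpw, hnc, h0, (hiff π hpw h0).mp h1⟩
    · rintro ⟨hpw, hnc, h0, h1⟩
      exact ⟨hpw, hnc, h0, (hiff π hpw h0).mpr h1⟩
  have h := key hn σ ({1, 2, 3} : Set ℕ) n (by omega) le_rfl H
    (fun π' => ∀ h : 0 < n - 1, π' ⟨0, h⟩ = ℓ)
  unfold T2 T1
  rw [e1]
  exact h

lemma Hlow (σ : Fin 5 → ℕ) (i : Fin 5) (hi : σ i < σ 0) :
    ∀ f : Fin 5 → ℕ, Function.Injective f → (∀ s t, f s < f t ↔ σ s < σ t) →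
      (∀ s, 1 ≤ f s ∧ f s ≤ n) → f 0 ≠ 1 := by
  intro f hinj hord hb h0
  have h1 : f i < f 0 := (hord i 0).mpr hi
  have h2 := (hb i).1
  omega

lemma Hhigh (hn : 2 ≤ n) (σ : Fin 5 → ℕ) (i : Fin 5) (hi : σ 0 < σ i) :
    ∀ f : Fin 5 → ℕ, Function.Injective f → (∀ s t, f s < f t ↔ σ s < σ t) →
      (∀ s, 1 ≤ f s ∧ f s ≤ n) → f 0 ≠ n := by
  intro f hinj hord hb h0
  have h1 : f 0 < f i := (hord 0 i).mpr hi
  have h2 := (hb i).2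
  omega

lemma Hsecond (hn : 2 ≤ n) (σ : Fin 5 → ℕ) (i j : Fin 5) (hij : i ≠ j)
    (hi : σ i < σ 0) (hj : σ j < σ 0) :
    ∀ f : Fin 5 → ℕ, Function.Injective f → (∀ s t, f s < f t ↔ σ s < σ t) →
      (∀ s, 1 ≤ f s ∧ f s ≤ n) → f 0 ≠ 2 := by
  intro f hinj hord hb h0
  have h1 : f i < f 0 := (hord i 0).mpr hi
  have h2 : f j < f 0 := (hord j 0).mpr hj
  have h3 := (hb i).1
  have h4 := (hb j).1
  exact hij (hinj (by omega : f i = f j))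

lemma Hsecondhigh (hn : 2 ≤ n) (σ : Fin 5 → ℕ) (i j : Fin 5) (hij : i ≠ j)
    (hi : σ 0 < σ i) (hj : σ 0 < σ j) :
    ∀ f : Fin 5 → ℕ, Function.Injective f → (∀ s t, f s < f t ↔ σ s < σ t) →
      (∀ s, 1 ≤ f s ∧ f s ≤ n) → f 0 ≠ n - 1 := by
  intro f hinj hord hb h0
  have h1 : f 0 < f i := (hord 0 i).mpr hi
  have h2 : f 0 < f j := (hord 0 j).mpr hj
  have h3 := (hb i).2
  have h4 := (hb j).2
  exact hij (hinj (by omega : f i = f j))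


end S15

/-- Proposition: (a) `T_n(σ)[1] = T_n(σ)[n-1] = T_n(σ)[n] = T_{n-1}(σ)`;
(b) `T_n(τ)[1] = T_n(τ)[2] = T_n(τ)[n] = T_{n-1}(τ)`;
(c) `T_n(σ)[n, ℓ] = T_{n-1}(σ)[ℓ]`, where `σ = 2153-4` and `τ = 3154-2`. -/
theorem stmt15 (n : ℕ) (hn : 2 ≤ n) :
    (T1 n ![2,1,5,3,4] 1 = T0 (n - 1) ![2,1,5,3,4] ∧
     T1 n ![2,1,5,3,4] (n - 1) = T0 (n - 1) ![2,1,5,3,4] ∧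
     T1 n ![2,1,5,3,4] n = T0 (n - 1) ![2,1,5,3,4]) ∧
    (T1 n ![3,1,5,4,2] 1 = T0 (n - 1) ![3,1,5,4,2] ∧
     T1 n ![3,1,5,4,2] 2 = T0 (n - 1) ![3,1,5,4,2] ∧
     T1 n ![3,1,5,4,2] n = T0 (n - 1) ![3,1,5,4,2]) ∧
    (∀ ℓ : ℕ, 1 ≤ ℓ → ℓ ≤ n - 1 →
      T2 n ![2,1,5,3,4] n ℓ = T1 (n - 1) ![2,1,5,3,4] ℓ) := by
  refine ⟨⟨?_, ?_, ?_⟩, ⟨?_, ?_, ?_⟩, ?_⟩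
  · exact S15.keyT1 hn _ 1 le_rfl (by omega) (S15.Hlow _ 1 (by decide))
  · exact S15.keyT1 hn _ (n-1) (by omega) (by omega)
      (S15.Hsecondhigh hn _ 2 4 (by decide) (by decide) (by decide))
  · exact S15.keyT1 hn _ n (by omega) le_rfl (S15.Hhigh hn _ 2 (by decide))
  · exact S15.keyT1 hn _ 1 le_rfl (by omega) (S15.Hlow _ 1 (by decide))
  · exact S15.keyT1 hn _ 2 (by omega) (by omega)
      (S15.Hsecond hn _ 1 4 (by decide) (by decide) (by decide))
  · exact S15.keyT1 hn _ n (by omega) le_rfl (S15.Hhigh hn _ 2 (by decide))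
  · intro ℓ hl1 hl2
    exact S15.keyT2 hn _ ℓ hl2 (S15.Hhigh hn _ 2 (by decide))
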